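/- arXiv:math/0605377 — 3 statements merged into one kernel-verified Lean document; each statement's English description precedes it below -/
import Mathlib

section
/- Let P(x) = Σ_{i=0}^n C(n,i) a_i x^i and Q(x) = Σ_{i=0}^n C(n,i) b_i x^i be complex polynomials. Define K_s = Σ_{q=0}^s C(s,q) a_q and L_r = Σ_{q=0}^r C(r,q) b_{q+n-r}. Then Σ_{j=0}^n (-1)^j C(n,j) K_j L_{n-j} = Σ_{j=0}^n (-1)^j C(n,j) a_j b_j, i.e. this sum equals (P∗Q)(-1). -/
open Polynomial Finset

/-- Schur-Szegő composition of two polynomials of degree at most `n`: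
if `P = ∑ C(n,i) aᵢ xⁱ` and `Q = ∑ C(n,i) bᵢ xⁱ` then `P ∗ Q = ∑ C(n,i) aᵢ bᵢ xⁱ`. -/
noncomputable def schurSzego {K : Type*} [Field K] (n : ℕ) (P Q : Polynomial K) :
    Polynomial K :=
  ∑ i ∈ Finset.range (n + 1),
    Polynomial.C (P.coeff i * Q.coeff i / (n.choose i : K)) * Polynomial.X ^ i

/-!
With `x, y` two commuting variables, `Kⱼ L_{n-j}` is the value of the functional
`xᵘ yᵛ ↦ aᵤ bᵥ` on `(1 + x)ʲ yʲ (1 + y)ⁿ⁻ʲ`, and the binomial theorem gives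
`∑ⱼ (-1)ʲ C(n,j) (1 + x)ʲ yʲ (1 + y)ⁿ⁻ʲ = ((1 + y) - (1 + x) y)ⁿ = (1 - x y)ⁿ`,
whose value under the functional is `∑ⱼ (-1)ʲ C(n,j) aⱼ bⱼ`. The functional is realised on
`R[X] ⊗[R] R[X]`, with `x = X ⊗ 1` and `y = 1 ⊗ X`.
-/

theorem neg_mul_add_pow_eq_sum {S : Type*} [CommRing S] (u v w : S) (n : ℕ) :
    (-(u * v) + w) ^ n =
      ∑ j ∈ range (n + 1), ((-1) ^ j * n.choose j : ℤ) • (u ^ j * (v ^ j * w ^ (n - j))) := by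
  rw [add_pow]
  refine sum_congr rfl fun j _ => ?_
  rw [zsmul_eq_mul, neg_pow, mul_pow]
  push_cast
  ring

namespace Polynomial

variable {R : Type*} [CommSemiring R]

/-- The linear functional `p ↦ ∑ᵢ cᵢ pᵢ`. -/
noncomputable def coeffPairing (c : ℕ → R) : R[X] →ₗ[R] R :=
  lsum fun i => c i • LinearMap.id

variable (c : ℕ → R)

theorem coeffPairing_monomial (k : ℕ) (r : R) : coeffPairing c (monomial k r) = c k * r := by
  simp [coeffPairing, sum_monomial_index]

theorem coeffPairing_X_pow (k : ℕ) : coeffPairing c (X ^ k) = c k := by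
  rw [X_pow_eq_monomial, coeffPairing_monomial, mul_one]

theorem coeffPairing_X_pow_mul (k : ℕ) (p : R[X]) :
    coeffPairing c (X ^ k * p) = coeffPairing (fun i => c (i + k)) p := by
  induction p using Polynomial.induction_on' with
  | add p q hp hq => rw [mul_add, map_add, map_add, hp, hq]
  | monomial n r => rw [X_pow_mul_monomial, coeffPairing_monomial, coeffPairing_monomial]

theorem coeffPairing_eq_sum_range {p : R[X]} {N : ℕ} (hp : p.natDegree < N) :
    coeffPairing c p = ∑ i ∈ range N, c i * p.coeff i := by
  simp only [coeffPairing, lsum_apply, LinearMap.smul_apply, LinearMap.id_apply, smul_eq_mul]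
  exact sum_over_range' p (fun i => mul_zero (c i)) N hp

theorem coeffPairing_X_add_one_pow (k : ℕ) :
    coeffPairing c ((X + 1) ^ k) = ∑ i ∈ range (k + 1), (k.choose i : R) * c i := by
  rw [coeffPairing_eq_sum_range c (N := k + 1) (Nat.lt_succ_of_le (by compute_degree))]
  simp only [coeff_X_add_one_pow, mul_comm]

theorem coeff_sum_range_C_mul_X_pow {N k : ℕ} (hk : k < N) :
    (∑ i ∈ range N, C (c i) * X ^ i).coeff k = c k := by
  simp [finsetSum_coeff, hk]

end Polynomial

open TensorProduct in
theorem sum_neg_one_pow_choose_mul_binomial_sums {R : Type*} [CommRing R] (n : ℕ)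
    (a b : ℕ → R) :
    ∑ j ∈ range (n + 1), (-1) ^ j * n.choose j *
        (∑ q ∈ range (j + 1), j.choose q * a q) *
        (∑ q ∈ range (n - j + 1), (n - j).choose q * b (q + j)) =
      ∑ j ∈ range (n + 1), (-1) ^ j * n.choose j * a j * b j := by
  set Φ : R[X] ⊗[R] R[X] →ₗ[R] R :=
    LinearMap.mul' R R ∘ₗ TensorProduct.map (coeffPairing a) (coeffPairing b)
  have hΦ (p q : R[X]) : Φ (p ⊗ₜ q) = coeffPairing a p * coeffPairing b q := by
    simp [Φ]
  set x : R[X] ⊗[R] R[X] := X ⊗ₜ 1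
  set y : R[X] ⊗[R] R[X] := 1 ⊗ₜ X
  have hbinomial : ∑ j ∈ range (n + 1), ((-1) ^ j * n.choose j : ℤ) •
        (((X + 1) ^ j) ⊗ₜ[R] (X ^ j * (X + 1) ^ (n - j))) =
      ∑ j ∈ range (n + 1), ((-1) ^ j * n.choose j : ℤ) • ((X ^ j) ⊗ₜ[R] (X ^ j)) :=
    calc _ = ∑ j ∈ range (n + 1), ((-1) ^ j * n.choose j : ℤ) •
          ((x + 1) ^ j * (y ^ j * (y + 1) ^ (n - j))) := by
          simp [x, y, Algebra.TensorProduct.one_def, ← add_tmul, ← tmul_add]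
      _ = (-((x + 1) * y) + (y + 1)) ^ n := (neg_mul_add_pow_eq_sum _ _ _ n).symm
      _ = (-(x * y) + 1) ^ n := by ring
      _ = ∑ j ∈ range (n + 1), ((-1) ^ j * n.choose j : ℤ) • (x ^ j * (y ^ j * 1 ^ (n - j))) :=
          neg_mul_add_pow_eq_sum _ _ _ n
      _ = _ := by simp [x, y]
  have evaluated := congrArg Φ hbinomial
  simp only [map_sum, map_zsmul, hΦ, coeffPairing_X_add_one_pow, coeffPairing_X_pow_mul,
    coeffPairing_X_pow] at evaluated
  simpa [zsmul_eq_mul, mul_assoc] using evaluated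

theorem schurSzego_binomial_sums {K : Type*} [Field K] [CharZero K] (n : ℕ) (a b : ℕ → K) :
    schurSzego n (∑ i ∈ range (n + 1), C (n.choose i * a i) * X ^ i)
        (∑ i ∈ range (n + 1), C (n.choose i * b i) * X ^ i) =
      ∑ i ∈ range (n + 1), C (n.choose i * a i * b i) * X ^ i := by
  refine sum_congr rfl fun i hi => ?_
  have hi : i < n + 1 := mem_range.mp hi
  have hchoose : (n.choose i : K) ≠ 0 := Nat.cast_ne_zero.mpr (Nat.choose_pos (by omega)).ne'
  rw [coeff_sum_range_C_mul_X_pow _ hi, coeff_sum_range_C_mul_X_pow _ hi]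
  congr 2
  field_simp

theorem schurSzego_bilinear_identity (n : ℕ) (a b : ℕ → ℂ)
    (K : ℕ → ℂ) (L : ℕ → ℂ)
    (hK : ∀ s, K s = ∑ q ∈ Finset.range (s + 1), (s.choose q : ℂ) * a q)
    (hL : ∀ r, L r = ∑ q ∈ Finset.range (r + 1), (r.choose q : ℂ) * b (q + n - r)) :
    (∑ j ∈ Finset.range (n + 1), (-1 : ℂ) ^ j * (n.choose j : ℂ) * K j * L (n - j)) =
      (∑ j ∈ Finset.range (n + 1), (-1 : ℂ) ^ j * (n.choose j : ℂ) * a j * b j) ∧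
    (∑ j ∈ Finset.range (n + 1), (-1 : ℂ) ^ j * (n.choose j : ℂ) * a j * b j) =
      (schurSzego n
        (∑ i ∈ Finset.range (n + 1), Polynomial.C ((n.choose i : ℂ) * a i) * Polynomial.X ^ i)
        (∑ i ∈ Finset.range (n + 1), Polynomial.C ((n.choose i : ℂ) * b i) * Polynomial.X ^ i)).eval
        (-1) := by
  constructor
  · rw [← sum_neg_one_pow_choose_mul_binomial_sums n a b]
    refine sum_congr rfl fun j hj => ?_
    have hj : j ≤ n := Nat.lt_succ_iff.mp (mem_range.mp hj)
    rw [hK, hL]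
    congr 1
    refine sum_congr rfl fun q _ => ?_
    rw [show q + n - (n - j) = q + j by omega]
  · rw [schurSzego_binomial_sums, eval_finsetSum]
    refine sum_congr rfl fun j _ => ?_
    simp only [eval_mul, eval_C, eval_pow, eval_X]
    ring
end

section
/- Let P, Q be complex polynomials of degree n, let x_P be a root of P of multiplicity m_P and x_Q a root of Q of multiplicity m_Q, and suppose μ* := m_P + m_Q − n > 0. Then −x_P·x_Q is a root of the Schur-Szegő composition P∗Q of multiplicity at least μ*. -/
/-!
Both sides are linear in `Q`, so by Taylor expansion at `x_Q` it suffices to treat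
`Q = (x - x_Q)ᵗ` with `m_Q ≤ t ≤ n`. For such `Q`, `P ∗ Q` is `t!/n!` times the `(n - t)`-th
`y`-derivative of the homogenization `yⁿ P(x/y)`, evaluated at `y = -x_Q`. The homogenization is
divisible by `(x - x_P y)^{m_P}`, hence its `(n - t)`-th derivative by `(x - x_P y)^{m_P - (n - t)}`,
which becomes `(x + x_P x_Q)^{m_P + t - n}` at `y = -x_Q`.
-/

open Polynomial Finset

open scoped Nat

theorem Nat.choose_mul_factorial_eq_choose_mul_factorial_mul_descFactorial {n t i : ℕ}
    (ht : t ≤ n) (hi : i ≤ n) :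
    t.choose i * n ! = n.choose i * t ! * (n - i).descFactorial (n - t) := by
  rcases le_or_gt i t with hit | hit
  · have hsymm : (n - i).choose (t - i) = (n - i).choose (n - t) :=
      Nat.choose_symm_of_eq_add (by omega)
    rw [Nat.descFactorial_eq_factorial_mul_choose, ← Nat.choose_mul_factorial_mul_factorial ht]
    calc t.choose i * (n.choose t * t ! * (n - t)!)
        = n.choose t * t.choose i * t ! * (n - t)! := by ring
      _ = n.choose i * t ! * ((n - t)! * (n - i).choose (n - t)) := by
        rw [Nat.choose_mul hit, hsymm]; ring
  · rw [Nat.choose_eq_zero_of_lt hit, Nat.descFactorial_eq_zero_iff_lt.mpr (by omega)]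
    simp

namespace Polynomial

section CommSemiring

variable {R : Type*} [CommSemiring R]

/-- `A.homogenize n` as an element of `R[x][y]`, i.e. `∑ aᵢ xⁱ yⁿ⁻ⁱ`, with `y` the outer
variable. -/
noncomputable def homogenizeY (n : ℕ) (A : R[X]) : R[X][X] :=
  MvPolynomial.aeval ![C X, X] (A.homogenize n)

lemma homogenizeY_eq_sum (n : ℕ) (A : R[X]) :
    homogenizeY n A = ∑ i ∈ range (n + 1), C (C (A.coeff i) * X ^ i) * X ^ (n - i) := by
  rw [homogenizeY, homogenize, map_sum, Nat.sum_antidiagonal_eq_sum_range_succ_mk]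
  refine sum_congr rfl fun i _ => ?_
  rw [MvPolynomial.aeval_monomial, Finsupp.prod_fintype _ _ (by simp), Fin.prod_univ_two]
  simp [C_mul, mul_assoc]

lemma homogenizeY_mul {A B : R[X]} {m k : ℕ} (hA : A.natDegree ≤ m) (hB : B.natDegree ≤ k) :
    homogenizeY (m + k) (A * B) = homogenizeY m A * homogenizeY k B := by
  rw [homogenizeY, homogenize_mul A B hA hB, map_mul, homogenizeY, homogenizeY]

lemma eval_iterate_derivative_homogenizeY (n k : ℕ) (A : R[X]) (c : R) :
    eval (C c) (derivative^[k] (homogenizeY n A)) =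
      ∑ i ∈ range (n + 1), C (A.coeff i * (n - i).descFactorial k * c ^ (n - i - k)) * X ^ i := by
  rw [homogenizeY_eq_sum, iterate_derivative_sum, eval_finsetSum]
  refine sum_congr rfl fun i _ => ?_
  rw [iterate_derivative_C_mul, iterate_derivative_X_pow_eq_C_mul]
  simp only [eval_mul, eval_C, eval_pow, eval_X, eval_natCast, C_mul, C_pow, map_natCast]
  ring

end CommSemiring

section CommRing

variable {R : Type*} [CommRing R]

lemma homogenizeY_X_sub_C_pow (p : R) (m : ℕ) :
    homogenizeY m ((X - C p) ^ m) = (C X - C (C p) * X) ^ m := by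
  induction m with
  | zero => simp [homogenizeY]
  | succ m ih =>
    have hdeg : ((X - C p) ^ m).natDegree ≤ m := by
      simpa using natDegree_pow_le_of_le m (natDegree_X_sub_C_le p)
    rw [pow_succ, homogenizeY_mul hdeg (natDegree_X_sub_C_le p), ih, pow_succ]
    simp [homogenizeY, homogenize_sub]

lemma pow_dvd_homogenizeY [Nontrivial R] {A : R[X]} {n m : ℕ} {p : R}
    (hdvd : (X - C p) ^ m ∣ A) (hA : A.natDegree ≤ n) :
    (C X - C (C p) * X) ^ m ∣ homogenizeY n A := by
  obtain ⟨B, rfl⟩ := hdvd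
  rcases eq_or_ne B 0 with rfl | hB
  · simp [homogenizeY]
  have hXm : ((X - C p) ^ m).natDegree = m := by
    rw [(monic_X_sub_C p).natDegree_pow, natDegree_X_sub_C, mul_one]
  have hdeg := ((monic_X_sub_C p).pow m).natDegree_mul' hB
  rw [show n = m + (n - m) by omega, homogenizeY_mul hXm.le (by omega), homogenizeY_X_sub_C_pow]
  exact dvd_mul_right _ _

lemma taylor_coeff_eq_zero_of_pow_dvd {f : R[X]} {r : R} {m t : ℕ} (hdvd : (X - C r) ^ m ∣ f)
    (ht : t < m) : (taylor r f).coeff t = 0 := by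
  obtain ⟨g, rfl⟩ := hdvd
  have hX : X ^ m ∣ taylor r ((X - C r) ^ m * g) := by
    rw [taylor_mul, taylor_pow, map_sub, taylor_X, taylor_C, add_sub_cancel_right]
    exact dvd_mul_right _ _
  exact X_pow_dvd_iff.mp hX t ht

lemma sum_range_taylor_eq {f : R[X]} {n : ℕ} (hf : f.natDegree ≤ n) (r : R) :
    ∑ t ∈ range (n + 1), (taylor r f).coeff t • (X - C r) ^ t = f := by
  conv_rhs => rw [← sum_taylor_eq f r]
  rw [sum_over_range' _ (by simp) (n + 1) (by rw [natDegree_taylor]; omega)]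
  simp only [smul_eq_C_mul]

end CommRing

end Polynomial

section SchurSzego

variable {K : Type*} [Field K]

noncomputable def schurSzegoLeft (n : ℕ) (P : K[X]) : K[X] →ₗ[K] K[X] where
  toFun := schurSzego n P
  map_add' Q₁ Q₂ := by
    simp only [schurSzego, coeff_add, mul_add, add_div, map_add, add_mul, sum_add_distrib]
  map_smul' c Q := by
    simp only [schurSzego, RingHom.id_apply, smul_sum, smul_eq_C_mul, coeff_C_mul,
      ← mul_assoc, ← C_mul]
    congr! 3
    ring

lemma schurSzegoLeft_apply (n : ℕ) (P Q : K[X]) : schurSzegoLeft n P Q = schurSzego n P Q := rfl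

variable [CharZero K]

lemma schurSzego_X_sub_C_pow (n : ℕ) (P : K[X]) (q : K) {t : ℕ} (ht : t ≤ n) :
    schurSzego n P ((X - C q) ^ t) =
      C ((t ! : K) / n !) * eval (C (-q)) (derivative^[n - t] (homogenizeY n P)) := by
  rw [eval_iterate_derivative_homogenizeY, mul_sum, schurSzego]
  refine sum_congr rfl fun i hi => ?_
  replace hi := mem_range_succ_iff.mp hi
  rw [← mul_assoc, ← C_mul, sub_eq_add_neg, ← C_neg, coeff_X_add_C_pow]
  congr 2
  have hcast : (t.choose i : K) * n ! = n.choose i * t ! * (n - i).descFactorial (n - t) := by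
    exact_mod_cast Nat.choose_mul_factorial_eq_choose_mul_factorial_mul_descFactorial ht hi
  have hchoose : (n.choose i : K) ≠ 0 := by exact_mod_cast (Nat.choose_pos hi).ne'
  have hfact : (n ! : K) ≠ 0 := Nat.cast_ne_zero.mpr n.factorial_ne_zero
  rcases le_or_gt i t with hit | hit
  · rw [show n - i - (n - t) = t - i by omega]
    field_simp
    linear_combination P.coeff i * (-q) ^ (t - i) * hcast
  · simp [Nat.choose_eq_zero_of_lt hit,
      Nat.descFactorial_eq_zero_iff_lt.mpr (by omega : n - i < n - t)]

lemma pow_dvd_schurSzego_X_sub_C_pow {n m t : ℕ} {P : K[X]} {p : K} (q : K)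
    (hdvd : (X - C p) ^ m ∣ P) (hP : P.natDegree ≤ n) (ht : t ≤ n) :
    (X - C (-(p * q))) ^ (m + t - n) ∣ schurSzego n P ((X - C q) ^ t) := by
  have hderiv := pow_sub_dvd_iterate_derivative_of_pow_dvd (n - t) (pow_dvd_homogenizeY hdvd hP)
  have heval : eval (C (-q)) (C X - C (C p) * X) = X - C (-(p * q)) := by
    simp only [eval_sub, eval_mul, eval_C, eval_X, ← C_mul, mul_neg]
  rw [schurSzego_X_sub_C_pow n P q ht, show m + t - n = m - (n - t) by omega, ← heval,
    ← eval_pow]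
  exact (map_dvd (evalRingHom (C (-q))) hderiv).mul_left _

end SchurSzego

theorem schurSzego_mult_lower_bound_general (n : ℕ) (P Q : Polynomial ℂ)
    (hP : P.natDegree = n) (hQ : Q.natDegree = n)
    (xP xQ : ℂ) (mP mQ : ℕ)
    (hmP : (Polynomial.X - Polynomial.C xP) ^ mP ∣ P)
    (hmQ : (Polynomial.X - Polynomial.C xQ) ^ mQ ∣ Q) :
    (Polynomial.X - Polynomial.C (-(xP * xQ))) ^ (mP + mQ - n) ∣ schurSzego n P Q := by
  rw [← sum_range_taylor_eq hQ.le xQ, ← schurSzegoLeft_apply, map_sum]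
  refine dvd_sum fun t ht => ?_
  rw [map_smul, smul_eq_C_mul]
  rcases lt_or_ge t mQ with htm | htm
  · simp [taylor_coeff_eq_zero_of_pow_dvd hmQ htm]
  · have hterm := pow_dvd_schurSzego_X_sub_C_pow xQ hmP hP.le (mem_range_succ_iff.mp ht)
    exact dvd_mul_of_dvd_right ((pow_dvd_pow _ (by omega)).trans hterm) _

theorem schurSzego_mult_lower_bound (n : ℕ) (P Q : Polynomial ℂ)
    (hP : P.natDegree = n) (hQ : Q.natDegree = n)
    (xP xQ : ℂ) (mP mQ : ℕ)
    (hmP : (Polynomial.X - Polynomial.C xP) ^ mP ∣ P)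
    (hmQ : (Polynomial.X - Polynomial.C xQ) ^ mQ ∣ Q)
    (hμ : n < mP + mQ) :
    (Polynomial.X - Polynomial.C (-(xP * xQ))) ^ (mP + mQ - n) ∣ schurSzego n P Q :=
  schurSzego_mult_lower_bound_general n P Q hP hQ xP xQ mP mQ hmP hmQ
end

section
/- If P is a real hyperbolic polynomial of degree n (all roots real) and Q is a real polynomial of degree n all of whose roots are real and negative, then P∗Q is hyperbolic, i.e., all roots of P∗Q are real; moreover every root of P∗Q lies in the interval [−M, −m], where M is the maximum and m the minimum over all products α·β with α a root of P and β a root of Q. -/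
/-
Via Grace's apolarity theorem. A complex number `γ` is a root of `P ∗ Q` exactly when `P` is apolar
to `R_γ = ∑ qₖ (-γ)ᵏ X^(n-k)`, whose roots are the numbers `-γ/β` with `β` a root of `Q`. Grace's
theorem, in its half-plane form, says that every closed half-plane containing the roots of `P`
contains a root of `R_γ`; it follows by induction on the degree from Laguerre's theorem on polar
derivatives, which in turn comes from the logarithmic derivative and Cauchy–Schwarz. Since `β < 0`,
applying this to the half-planes `Im z ≥ 0`, `Im z ≤ 0`, `Re z ≤ max α` and `Re z ≥ min α` shows
that `γ` is real and `-M ≤ γ ≤ -m`.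
-/

open Polynomial Finset

open scoped ComplexConjugate Nat

theorem Multiset.sq_sum_map_le_card_mul_sum_map_sq {α : Type*} (s : Multiset α) (f : α → ℝ) :
    (s.map f).sum ^ 2 ≤ s.card * (s.map (f · ^ 2)).sum := by
  classical
  have hsum (g : α → ℝ) : ∑ p ∈ s.toEnumFinset, g p.1 = (s.map g).sum := by
    rw [Finset.sum_eq_multiset_sum, ← Function.comp_def g Prod.fst, ← Multiset.map_map,
      Multiset.map_toEnumFinset_fst]
  simpa only [hsum, hsum (f · ^ 2), Multiset.card_toEnumFinset] using
    sq_sum_le_card_mul_sum_sq (s := s.toEnumFinset) (f := fun p => f p.1)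

theorem Complex.re_mul_conj_inv (u z : ℂ) :
    (u * conj z⁻¹).re = (u * z).re * ‖z⁻¹‖ ^ 2 := by
  rw [map_inv₀, Complex.inv_def, Complex.conj_conj, norm_inv, inv_pow, Complex.sq_norm,
    ← mul_assoc, Complex.re_mul_ofReal, Complex.normSq_conj]

theorem Multiset.re_mul_conj_sum (s : Multiset ℂ) (u : ℂ) :
    (u * conj s.sum).re = (s.map fun v => (u * conj v).re).sum := by
  rw [map_multiset_sum, ← Multiset.sum_map_mul_left]
  exact map_multiset_sum Complex.reAddGroupHom _ |>.trans (by rw [Multiset.map_map]; rfl)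

/-- The closed disc `{v | δ ‖v‖² ≤ Re (u v̄)}` is convex and contains `0`, so it contains
`s.sum / m`. -/
theorem Multiset.mul_norm_sum_sq_le_mul_re {s : Multiset ℂ} {u : ℂ} {δ : ℝ} {m : ℕ}
    (hδ : 0 ≤ δ) (hs : ∀ v ∈ s, δ * ‖v‖ ^ 2 ≤ (u * conj v).re) (hm : s.card ≤ m) :
    δ * ‖s.sum‖ ^ 2 ≤ m * (u * conj s.sum).re := calc
  δ * ‖s.sum‖ ^ 2 ≤ δ * (m * (s.map (‖·‖ ^ 2)).sum) := by
    gcongr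
    calc ‖s.sum‖ ^ 2 ≤ (s.map (‖·‖)).sum ^ 2 := by gcongr; exact norm_multiset_sum_le s
      _ ≤ s.card * (s.map (‖·‖ ^ 2)).sum := by
        simpa using s.sq_sum_map_le_card_mul_sum_map_sq (‖·‖)
      _ ≤ m * (s.map (‖·‖ ^ 2)).sum := by
        gcongr
        exact Multiset.sum_nonneg fun _ hx => by
          obtain ⟨v, -, rfl⟩ := Multiset.mem_map.mp hx; positivity
  _ = m * (s.map (δ * ‖·‖ ^ 2)).sum := by rw [Multiset.sum_map_mul_left]; ring
  _ ≤ m * (u * conj s.sum).re := by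
    rw [s.re_mul_conj_sum]; gcongr; exact Multiset.sum_map_le_sum_map _ _ hs

namespace Polynomial

section CommRing

variable {K : Type*} [CommRing K]

/-- `A` is viewed as a polynomial of degree `m`. -/
noncomputable def polarDerivative (m : ℕ) (ζ : K) (A : K[X]) : K[X] :=
  C (m : K) * A + (C ζ - X) * derivative A

theorem coeff_polarDerivative (m : ℕ) (ζ : K) (A : K[X]) (k : ℕ) :
    (polarDerivative m ζ A).coeff k = (m - k) * A.coeff k + ζ * (k + 1) * A.coeff (k + 1) := by
  rcases k with _ | k
  · simp [polarDerivative, coeff_derivative, sub_mul]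
  · simp only [polarDerivative, map_natCast, sub_mul, coeff_add, coeff_natCast_mul, coeff_sub,
      coeff_C_mul, coeff_derivative, Nat.cast_add, Nat.cast_one, coeff_X_mul]
    ring

theorem eval_polarDerivative_self (m : ℕ) (ζ : K) (A : K[X]) :
    (polarDerivative m ζ A).eval ζ = m * A.eval ζ := by
  simp [polarDerivative]

theorem natDegree_polarDerivative_le {m : ℕ} (ζ : K) {A : K[X]} (hA : A.natDegree ≤ m + 1) :
    (polarDerivative (m + 1) ζ A).natDegree ≤ m := by
  refine natDegree_le_iff_coeff_eq_zero.mpr fun k hk => ?_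
  rw [coeff_polarDerivative, coeff_eq_zero_of_natDegree_lt (n := k + 1) (by omega)]
  obtain rfl | hk := (Nat.succ_le_of_lt hk).eq_or_lt
  · push_cast; ring
  · rw [coeff_eq_zero_of_natDegree_lt (by omega)]; ring

/-- With `A = ∑ C(m,i) aᵢ Xⁱ` and `R = ∑ C(m,i) rᵢ Xⁱ` this is `m! ∑ (-1)ⁱ C(m,i) aᵢ r_{m-i}`,
the classical apolarity form. -/
def apolarPairing (m : ℕ) (A R : K[X]) : K :=
  ∑ p ∈ antidiagonal m, (-1) ^ p.1 * p.1 ! * p.2 ! * A.coeff p.1 * R.coeff p.2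

theorem apolarPairing_polarDerivative {m : ℕ} (r : K) (A : K[X]) {R : K[X]}
    (hR : R.coeff (m + 1) = 0) :
    apolarPairing m (polarDerivative (m + 1) r A) R =
      apolarPairing (m + 1) A ((X - C r) * R) := by
  set a : ℕ × ℕ → K := fun p => (-1) ^ p.1 * p.1 ! * p.2 ! * A.coeff p.1
  have hXR : ∑ p ∈ antidiagonal (m + 1), a p * (X * R).coeff p.2 =
      ∑ p ∈ antidiagonal m, a p * ((p.2 + 1 : ℕ) * R.coeff p.2) := by
    rw [Nat.sum_antidiagonal_succ']
    simp only [Nat.factorial_succ, Nat.cast_mul, Nat.cast_add, Nat.cast_one, Nat.factorial_zero,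
      mul_one, mul_coeff_zero, coeff_X_zero, zero_mul, mul_zero, coeff_X_mul, zero_add, a]
    exact sum_congr rfl fun _ _ => by ring
  have hCR : ∑ p ∈ antidiagonal (m + 1), a p * R.coeff p.2 =
      -∑ p ∈ antidiagonal m,
        (-1) ^ p.1 * p.1 ! * p.2 ! * ((p.1 + 1 : ℕ) * A.coeff (p.1 + 1)) * R.coeff p.2 := by
    rw [Nat.sum_antidiagonal_succ]
    simp only [pow_zero, Nat.factorial_zero, Nat.cast_one, mul_one, Nat.factorial_succ,
      Nat.cast_mul, Nat.cast_add, one_mul, hR, mul_zero, pow_succ, mul_neg, neg_mul,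
      sum_neg_distrib, zero_add, neg_inj, a]
    exact sum_congr rfl fun _ _ => by ring
  have hsplit : apolarPairing (m + 1) A ((X - C r) * R) =
      ∑ p ∈ antidiagonal (m + 1), a p * (X * R).coeff p.2 -
        r * ∑ p ∈ antidiagonal (m + 1), a p * R.coeff p.2 := by
    simp only [apolarPairing, sub_mul, coeff_sub, coeff_C_mul, mul_sum, ← sum_sub_distrib]
    exact sum_congr rfl fun p _ => by ring
  rw [hsplit, hXR, hCR, apolarPairing, mul_neg, sub_neg_eq_add, mul_sum, ← sum_add_distrib]
  refine sum_congr rfl fun p hp => ?_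
  rw [HasAntidiagonal.mem_antidiagonal] at hp
  rw [coeff_polarDerivative, ← hp]
  push_cast
  ring

theorem natDegree_comp_C_mul_X_le (Q : K[X]) (a : K) :
    (Q.comp (C a * X)).natDegree ≤ Q.natDegree :=
  natDegree_le_iff_coeff_eq_zero.mpr fun k hk => by
    rw [comp_C_mul_X_coeff, coeff_eq_zero_of_natDegree_lt hk, zero_mul]

theorem degree_reflect_comp_C_mul_X {n : ℕ} {Q : K[X]} (hQ : Q.natDegree ≤ n)
    (hQ0 : Q.coeff 0 ≠ 0) (a : K) : ((Q.comp (C a * X)).reflect n).degree = n := by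
  refine degree_eq_of_le_of_coeff_ne_zero (degree_le_of_natDegree_le ?_) ?_
  · exact natDegree_reflect_le.trans (max_le le_rfl ((natDegree_comp_C_mul_X_le Q a).trans hQ))
  · rwa [coeff_reflect, revAt_le le_rfl, Nat.sub_self, comp_C_mul_X_coeff, pow_zero, mul_one]

end CommRing

/-- **Laguerre's theorem** for half-planes. -/
theorem re_mul_le_of_isRoot_polarDerivative {m : ℕ} (hm : 0 < m) {A : ℂ[X]} (hA : A ≠ 0)
    (hdeg : A.natDegree ≤ m) {u : ℂ} {c : ℝ} (hroots : ∀ a ∈ A.roots, (u * a).re ≤ c) {ζ : ℂ}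
    (hζ : c < (u * ζ).re) {w : ℂ} (hw : (polarDerivative m ζ A).IsRoot w) : (u * w).re ≤ c := by
  -- With `S = A'(w)/A(w) = ∑ 1/(w - a)`, the root condition reads `w - ζ = m/S`. Every
  -- `1/(w - a)` lies in the disc `δ ‖v‖² ≤ Re (u v̄)`, `δ = Re (u w) - c`, hence so does `S/m`,
  -- which means `Re (u (w - ζ)) ≥ δ`.
  by_contra! hcw
  have hAw : A.eval w ≠ 0 := fun h => hcw.not_ge (hroots w (mem_roots'.mpr ⟨hA, h⟩))
  set s := A.roots.map fun a => 1 / (w - a)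
  have hmS : (m : ℂ) + (ζ - w) * s.sum = 0 := by
    have hS := (IsAlgClosed.splits A).eval_derivative_eq_eval_mul_sum hAw
    simp only [IsRoot, polarDerivative, eval_add, eval_mul, eval_C, eval_sub, eval_X, hS] at hw
    exact mul_left_cancel₀ hAw (by linear_combination hw)
  have hS0 : s.sum ≠ 0 := fun h => by simp [h, hm.ne'] at hmS
  have hwζ : u * (w - ζ) = m * (u * (s.sum)⁻¹) := by
    field_simp
    linear_combination (-u) * hmS
  have hterm : ∀ v ∈ s, ((u * w).re - c) * ‖v‖ ^ 2 ≤ (u * conj v).re := by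
    intro v hv
    obtain ⟨a, ha, rfl⟩ := Multiset.mem_map.mp hv
    rw [one_div, Complex.re_mul_conj_inv]
    gcongr
    simp only [mul_sub, Complex.sub_re]
    linarith [hroots a ha]
  have key : ((u * w).re - c) * ‖s.sum‖ ^ 2 ≤ (u * (w - ζ)).re * ‖s.sum‖ ^ 2 := calc
    _ ≤ m * (u * conj s.sum).re := s.mul_norm_sum_sq_le_mul_re (by linarith) hterm
        (by rw [Multiset.card_map]; exact (card_roots' A).trans hdeg)
    _ = (u * (w - ζ)).re * ‖s.sum‖ ^ 2 := by
      rw [hwζ, ← inv_inv s.sum, Complex.re_mul_conj_inv, inv_inv, ← Complex.ofReal_natCast,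
        Complex.re_ofReal_mul, mul_assoc]
  have := le_of_mul_le_mul_right key (by positivity)
  simp only [mul_sub, Complex.sub_re] at this
  linarith

/-- **Grace's apolarity theorem** for half-planes. -/
theorem exists_mem_roots_re_mul_le_of_apolarPairing_eq_zero {u : ℂ} {c : ℝ} {m : ℕ}
    {A R : ℂ[X]} (hA : A ≠ 0) (hAdeg : A.natDegree ≤ m) (hroots : ∀ a ∈ A.roots, (u * a).re ≤ c)
    (hR : R.degree = m) (hpair : apolarPairing m A R = 0) : ∃ z ∈ R.roots, (u * z).re ≤ c := by
  induction m generalizing A R with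
  | zero =>
    have hR0 := coeff_ne_zero_of_eq_degree hR
    rw [eq_C_of_natDegree_le_zero hAdeg, Ne, C_eq_zero] at hA
    simp [apolarPairing, hA, hR0] at hpair
  | succ m ih =>
    have hR0 : R ≠ 0 := ne_zero_of_degree_gt (n := 0) (by rw [hR]; exact_mod_cast m.succ_pos)
    obtain ⟨r, hr⟩ := Complex.exists_root (f := R) (by rw [hR]; exact_mod_cast m.succ_pos)
    rcases le_or_gt (u * r).re c with hrc | hrc
    · exact ⟨r, mem_roots'.mpr ⟨hR0, hr⟩, hrc⟩
    set R₁ := R /ₘ (X - C r)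
    have hfac : (X - C r) * R₁ = R := mul_divByMonic_eq_iff_isRoot.mpr hr
    have hR₁ : R₁.degree = m := by
      have hR₁0 : R₁ ≠ 0 := fun h => hR0 (by rw [← hfac, h, mul_zero])
      rw [degree_eq_natDegree hR₁0, natDegree_divByMonic _ (monic_X_sub_C r), natDegree_X_sub_C,
        natDegree_eq_of_degree_eq_some hR, Nat.add_sub_cancel]
    have hAr : A.eval r ≠ 0 := fun h => hrc.not_ge (hroots r (mem_roots'.mpr ⟨hA, h⟩))
    have hB : polarDerivative (m + 1) r A ≠ 0 := fun h => by
      simpa [h, hAr, Nat.cast_add_one_ne_zero] using eval_polarDerivative_self (m + 1) r A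
    obtain ⟨z, hz, hzc⟩ := ih hB (natDegree_polarDerivative_le r hAdeg)
      (fun b hb => re_mul_le_of_isRoot_polarDerivative m.succ_pos hA hAdeg hroots hrc
        (isRoot_of_mem_roots hb))
      hR₁ (by rw [apolarPairing_polarDerivative r A (coeff_eq_zero_of_degree_lt (by
        rw [hR₁]; exact_mod_cast m.lt_succ_self)), hfac, hpair])
    exact ⟨z, Multiset.mem_of_le (roots.le_of_dvd hR0 (Dvd.intro_left _ hfac)) hz, hzc⟩

end Polynomial

section SchurSzego

variable {K : Type*} [Field K]

theorem coeff_schurSzego (n : ℕ) (P Q : K[X]) (k : ℕ) :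
    (schurSzego n P Q).coeff k = if k ≤ n then P.coeff k * Q.coeff k / n.choose k else 0 := by
  simp [schurSzego, coeff_C_mul, coeff_X_pow]

theorem eval_schurSzego (n : ℕ) (P Q : K[X]) (x : K) :
    (schurSzego n P Q).eval x =
      ∑ i ∈ range (n + 1), P.coeff i * Q.coeff i / n.choose i * x ^ i := by
  simp [schurSzego, eval_finsetSum]

theorem natDegree_schurSzego {n : ℕ} {P Q : K[X]} (hP : P.coeff n ≠ 0) (hQ : Q.coeff n ≠ 0) :
    (schurSzego n P Q).natDegree = n := by
  refine natDegree_eq_of_le_of_coeff_ne_zero (natDegree_le_iff_coeff_eq_zero.mpr fun k hk => ?_) ?_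
  · rw [coeff_schurSzego, if_neg (by exact_mod_cast hk.not_ge)]
  · rw [coeff_schurSzego, if_pos le_rfl, Nat.choose_self, Nat.cast_one, div_one]
    exact mul_ne_zero hP hQ

theorem map_schurSzego {L : Type*} [Field L] (f : K →+* L) (n : ℕ) (P Q : K[X]) :
    (schurSzego n P Q).map f = schurSzego n (P.map f) (Q.map f) := by
  simp [schurSzego, Polynomial.map_sum]

/-- `(Q.comp (C (-γ) * X)).reflect n` is `∑ qₖ (-γ)ᵏ X^(n-k)`. -/
theorem apolarPairing_reflect_comp [CharZero K] (n : ℕ) (P Q : K[X]) (γ : K) :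
    apolarPairing n P ((Q.comp (C (-γ) * X)).reflect n) = n ! * (schurSzego n P Q).eval γ := by
  rw [apolarPairing, Nat.sum_antidiagonal_eq_sum_range_succ_mk, eval_schurSzego, mul_sum]
  refine sum_congr rfl fun k hk => ?_
  have hkn : k ≤ n := Nat.lt_succ_iff.mp (mem_range.mp hk)
  have hfac : (n.choose k : K) * k ! * (n - k)! = n ! := by
    exact_mod_cast Nat.choose_mul_factorial_mul_factorial hkn
  have hchoose : (n.choose k : K) ≠ 0 := by exact_mod_cast (Nat.choose_pos hkn).ne'
  have hsign : (-1 : K) ^ k * (-γ) ^ k = γ ^ k := by rw [← mul_pow, neg_one_mul, neg_neg]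
  rw [coeff_reflect, revAt_le (Nat.sub_le n k), Nat.sub_sub_self hkn, comp_C_mul_X_coeff, ← hfac]
  field_simp
  linear_combination (k ! * (n - k)! * P.coeff k * Q.coeff k : K) * hsign

theorem eval_reflect_comp_C_mul_X {n : ℕ} {Q : K[X]} (hQ : Q.natDegree ≤ n) (a : K) {z : K}
    (hz : z ≠ 0) : ((Q.comp (C a * X)).reflect n).eval z = z ^ n * Q.eval (a / z) := by
  have : Invertible z⁻¹ := invertibleOfNonzero (inv_ne_zero hz)
  have h := eval₂_reflect_mul_pow (RingHom.id K) z⁻¹ n (Q.comp (C a * X))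
    ((natDegree_comp_C_mul_X_le Q a).trans hQ)
  rw [invOf_eq_inv, inv_inv, eval₂_id, eval₂_id, eval_comp, eval_mul, eval_C, eval_X] at h
  rw [div_eq_mul_inv, ← h, mul_left_comm, ← mul_pow, mul_inv_cancel₀ hz, one_pow, mul_one]

theorem exists_mem_roots_mul_eq_of_isRoot_reflect_comp {n : ℕ} (hn : 0 < n) {Q : K[X]}
    (hQdeg : Q.natDegree = n) (hQ : Q.Splits) {a z : K}
    (hz : ((Q.comp (C a * X)).reflect n).IsRoot z) : ∃ β ∈ Q.roots, β * z = a := by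
  have hQ0 : Q ≠ 0 := ne_zero_of_natDegree_gt (hQdeg ▸ hn)
  rcases eq_or_ne z 0 with rfl | hz0
  · obtain ⟨β, hβ⟩ := Multiset.card_pos_iff_exists_mem.mp
      ((splits_iff_card_roots.mp hQ).trans hQdeg ▸ hn)
    rw [IsRoot, ← coeff_zero_eq_eval_zero, coeff_reflect, revAt_le n.zero_le, Nat.sub_zero,
      comp_C_mul_X_coeff, ← hQdeg] at hz
    have ha : a = 0 := eq_zero_of_pow_eq_zero <|
      (mul_eq_zero.mp hz).resolve_left (leadingCoeff_ne_zero.mpr hQ0)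
    exact ⟨β, hβ, by rw [ha, mul_zero]⟩
  · rw [IsRoot, eval_reflect_comp_C_mul_X hQdeg.le _ hz0] at hz
    exact ⟨a / z, mem_roots'.mpr ⟨hQ0, (mul_eq_zero.mp hz).resolve_left (pow_ne_zero _ hz0)⟩,
      div_mul_cancel₀ _ hz0⟩

end SchurSzego

theorem exists_mem_roots_re_mul_le_of_isRoot_schurSzego {n : ℕ} (hn : 0 < n) {P Q : ℝ[X]}
    (hP0 : P ≠ 0) (hPdeg : P.natDegree ≤ n) (hP : P.Splits) (hQdeg : Q.natDegree = n)
    (hQ : Q.Splits) (hQneg : ∀ β ∈ Q.roots, β < 0) {γ : ℂ}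
    (hγ : ((schurSzego n P Q).map Complex.ofRealHom).IsRoot γ) {u : ℂ} {c : ℝ}
    (hroots : ∀ α ∈ P.roots, (u * α).re ≤ c) : ∃ β ∈ Q.roots, (u * γ).re ≤ -(c * β) := by
  set Qc := Q.map Complex.ofRealHom
  have hQcdeg : Qc.natDegree = n := by rw [natDegree_map, hQdeg]
  have hQ0 : Q.coeff 0 ≠ 0 := fun h => (hQneg 0 (mem_roots'.mpr
    ⟨ne_zero_of_natDegree_gt (hQdeg ▸ hn), by rwa [IsRoot, ← coeff_zero_eq_eval_zero]⟩)).false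
  have hpair :
      apolarPairing n (P.map Complex.ofRealHom) ((Qc.comp (C (-γ) * X)).reflect n) = 0 := by
    rw [apolarPairing_reflect_comp, ← map_schurSzego, hγ.eq_zero, mul_zero]
  obtain ⟨z, hz, hzc⟩ := exists_mem_roots_re_mul_le_of_apolarPairing_eq_zero (map_ne_zero hP0)
    (by rwa [natDegree_map]) (by rw [hP.roots_map]; exact Multiset.forall_mem_map_iff.mpr hroots)
    (degree_reflect_comp_C_mul_X hQcdeg.le (by simpa [Qc] using hQ0) (-γ)) hpair
  obtain ⟨_, hβ', hβz⟩ := exists_mem_roots_mul_eq_of_isRoot_reflect_comp hn hQcdeg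
    (hQ.map Complex.ofRealHom) (isRoot_of_mem_roots hz)
  obtain ⟨β, hβ, rfl⟩ := Multiset.mem_map.mp (hQ.roots_map Complex.ofRealHom ▸ hβ')
  refine ⟨β, hβ, ?_⟩
  have hre : (u * γ).re = -β * (u * z).re := by
    rw [← Complex.re_ofReal_mul, ← neg_neg γ, ← hβz]
    rw [Complex.ofRealHom_eq_coe, Complex.ofReal_neg]
    congr 1
    ring
  nlinarith [hQneg β hβ]

theorem im_eq_zero_and_re_mem_Icc_of_isRoot_schurSzego {n : ℕ} (hn : 0 < n) {P Q : ℝ[X]}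
    (hPdeg : P.natDegree = n) (hP : P.Splits) (hQdeg : Q.natDegree = n) (hQ : Q.Splits)
    (hQneg : ∀ β ∈ Q.roots, β < 0) {M m : ℝ} (hM : ∀ α ∈ P.roots, ∀ β ∈ Q.roots, α * β ≤ M)
    (hm : ∀ α ∈ P.roots, ∀ β ∈ Q.roots, m ≤ α * β) {γ : ℂ}
    (hγ : ((schurSzego n P Q).map Complex.ofRealHom).IsRoot γ) :
    γ.im = 0 ∧ γ.re ∈ Set.Icc (-M) (-m) := by
  have key {u : ℂ} {c : ℝ} (hc : ∀ α ∈ P.roots, (u * α).re ≤ c) :=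
    exists_mem_roots_re_mul_le_of_isRoot_schurSzego hn (ne_zero_of_natDegree_gt (hPdeg ▸ hn))
      hPdeg.le hP hQdeg hQ hQneg hγ hc
  have hProots : P.roots ≠ 0 := hP.roots_ne_zero (hPdeg ▸ hn.ne')
  obtain ⟨αmax, hαmax, hmax⟩ := Multiset.exists_max_image id hProots
  obtain ⟨αmin, hαmin, hmin⟩ := Multiset.exists_min_image id hProots
  obtain ⟨_, -, hup⟩ := key (u := Complex.I) (c := 0) (by simp)
  obtain ⟨_, -, hdown⟩ := key (u := -Complex.I) (c := 0) (by simp)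
  obtain ⟨β, hβ, hright⟩ := key (u := 1) (c := αmax) fun α hα => by simpa using hmax α hα
  obtain ⟨β', hβ', hleft⟩ := key (u := -1) (c := -αmin) fun α hα => by simpa using hmin α hα
  have := hm αmax hαmax β hβ
  have := hM αmin hαmin β' hβ'
  simp only [Complex.mul_re, Complex.I_re, Complex.I_im, Complex.neg_re, zero_mul, one_mul,
    zero_sub, neg_zero, neg_mul, neg_neg, Left.neg_nonpos_iff] at hup hdown hright hleft
  exact ⟨by linarith, by linarith, by linarith⟩

theorem schurSzego_hyperbolic_interval (n : ℕ) (P Q : Polynomial ℝ)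
    (hPdeg : P.natDegree = n) (hQdeg : Q.natDegree = n)
    (hPhyp : P.roots.card = n) (hQhyp : Q.roots.card = n)
    (hQneg : ∀ β ∈ Q.roots, β < 0)
    (M m : ℝ)
    (hM : IsGreatest {x : ℝ | ∃ α ∈ P.roots, ∃ β ∈ Q.roots, x = α * β} M)
    (hm : IsLeast {x : ℝ | ∃ α ∈ P.roots, ∃ β ∈ Q.roots, x = α * β} m) :
    (schurSzego n P Q).roots.card = n ∧
    ∀ x ∈ (schurSzego n P Q).roots, x ∈ Set.Icc (-M) (-m) := by
  obtain ⟨⟨α₀, hα₀, β₀, hβ₀, -⟩, hMub⟩ := hM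
  have hn : 0 < n := hPhyp ▸ Multiset.card_pos_iff_exists_mem.mpr ⟨α₀, hα₀⟩
  have hroot {γ : ℂ} (hγ : ((schurSzego n P Q).map Complex.ofRealHom).IsRoot γ) :=
    im_eq_zero_and_re_mem_Icc_of_isRoot_schurSzego hn hPdeg
      (splits_iff_card_roots.mpr (hPhyp.trans hPdeg.symm)) hQdeg
      (splits_iff_card_roots.mpr (hQhyp.trans hQdeg.symm)) hQneg
      (fun α hα β hβ => hMub ⟨α, hα, β, hβ, rfl⟩) (fun α hα β hβ => hm.2 ⟨α, hα, β, hβ, rfl⟩) hγ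
  have hsplit : (schurSzego n P Q).Splits :=
    Splits.of_splits_map _ (IsAlgClosed.splits _) fun γ hγ =>
      ⟨γ.re, Complex.ext rfl (hroot (isRoot_of_mem_roots hγ)).1.symm⟩
  refine ⟨(splits_iff_card_roots.mp hsplit).trans (natDegree_schurSzego ?_ ?_),
    fun x hx => (hroot (isRoot_of_mem_roots hx).map).2⟩
  · exact hPdeg ▸ leadingCoeff_ne_zero.mpr (ne_zero_of_mem_roots hα₀)
  · exact hQdeg ▸ leadingCoeff_ne_zero.mpr (ne_zero_of_mem_roots hβ₀)
end
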